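/- arXiv:1105.4843 — 2 statements merged into one kernel-verified Lean document; each statement's English description precedes it below -/
import Mathlib

section
/- An Archimedean f-algebra E is faithful if and only if there is no strictly positive element of E with zero square, i.e. for every x > 0 one has x² ≠ 0. -/
/-!
Write `x = x⁺ - x⁻` and `y = y⁺ - y⁻`. In an `f`-algebra the products `x⁺y⁺ + x⁻y⁻` and
`x⁺y⁻ + x⁻y⁺` are disjoint, and their difference is `xy`. So if `xy = 0` they are equal, hence
both zero, and then `|x||y|`, their sum, vanishes too. For `a = |x| ⊓ |y|` this gives
`0 ≤ a² ≤ |x||y| = 0`, so `a = 0` as soon as no positive element squares to zero.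
-/

section LatticeOrderedGroup

variable {α : Type*} [AddCommGroup α] [Lattice α] [AddLeftMono α]

theorem add_inf_le_inf_add_inf {a b c : α} (ha : 0 ≤ a) (hb : 0 ≤ b) (hc : 0 ≤ c) :
    (a + b) ⊓ c ≤ a ⊓ c + b ⊓ c := by
  rw [add_inf, inf_add, inf_add]
  refine le_inf (le_inf inf_le_left ?_) (le_inf ?_ ?_) <;> refine inf_le_right.trans ?_
  · exact le_add_of_nonneg_right hb
  · exact le_add_of_nonneg_left ha
  · exact le_add_of_nonneg_left hc

theorem add_inf_eq_zero {a b c : α} (ha : 0 ≤ a) (hb : 0 ≤ b) (hc : 0 ≤ c)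
    (hac : a ⊓ c = 0) (hbc : b ⊓ c = 0) : (a + b) ⊓ c = 0 :=
  le_antisymm (by simpa [hac, hbc] using add_inf_le_inf_add_inf ha hb hc)
    (le_inf (add_nonneg ha hb) hc)

theorem add_inf_add_eq_zero {a b c d : α} (ha : 0 ≤ a) (hb : 0 ≤ b) (hc : 0 ≤ c) (hd : 0 ≤ d)
    (hac : a ⊓ c = 0) (had : a ⊓ d = 0) (hbc : b ⊓ c = 0) (hbd : b ⊓ d = 0) :
    (a + b) ⊓ (c + d) = 0 := by
  refine add_inf_eq_zero ha hb (add_nonneg hc hd) ?_ ?_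
  · rw [inf_comm] at hac had ⊢
    exact add_inf_eq_zero hc hd ha hac had
  · rw [inf_comm] at hbc hbd ⊢
    exact add_inf_eq_zero hc hd hb hbc hbd

end LatticeOrderedGroup

theorem PosMulMono.of_mul_nonneg {R : Type*} [Ring R] [Preorder R] [AddLeftMono R]
    (mul_nonneg : ∀ a b : R, 0 ≤ a → 0 ≤ b → 0 ≤ a * b) : PosMulMono R :=
  (posMulMono_iff R).2 fun a ha b c hbc ↦ by
    simpa only [mul_sub, sub_nonneg] using mul_nonneg _ _ ha (sub_nonneg.2 hbc)

theorem MulPosMono.of_mul_nonneg {R : Type*} [Ring R] [Preorder R] [AddLeftMono R]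
    (mul_nonneg : ∀ a b : R, 0 ≤ a → 0 ≤ b → 0 ≤ a * b) : MulPosMono R :=
  (mulPosMono_iff R).2 fun a ha b c hbc ↦ by
    simpa only [sub_mul, sub_nonneg] using mul_nonneg _ _ (sub_nonneg.2 hbc) ha

/-- The multiplicative axiom of an `f`-algebra. -/
def MulPreservesDisjoint (E : Type*) [Mul E] [Zero E] [Lattice E] : Prop :=
  ∀ a x y : E, 0 ≤ a → 0 ≤ x → 0 ≤ y → x ⊓ y = 0 → (a * x) ⊓ y = 0 ∧ (x * a) ⊓ y = 0

namespace MulPreservesDisjoint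

variable {E : Type*} [Ring E] [Lattice E] [PosMulMono E]

theorem mul_left_inf_mul_left {a u v : E} (hE : MulPreservesDisjoint E) (ha : 0 ≤ a)
    (hu : 0 ≤ u) (hv : 0 ≤ v) (huv : u ⊓ v = 0) : (a * u) ⊓ (a * v) = 0 := by
  have hau : (a * u) ⊓ v = 0 := (hE a u v ha hu hv huv).1
  rw [inf_comm] at hau ⊢
  exact (hE a v (a * u) ha hv (mul_nonneg ha hu) hau).1

theorem mul_right_inf_mul_right {a u v : E} (hE : MulPreservesDisjoint E) (ha : 0 ≤ a)
    (hu : 0 ≤ u) (hv : 0 ≤ v) (huv : u ⊓ v = 0) : (u * a) ⊓ (v * a) = 0 := by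
  have hua : (u * a) ⊓ v = 0 := (hE a u v ha hu hv huv).2
  rw [inf_comm] at hua ⊢
  exact (hE a v (u * a) ha hv (mul_nonneg hu ha) hua).2

theorem abs_mul_abs_eq_zero [AddLeftMono E] {x y : E} (hE : MulPreservesDisjoint E)
    (hxy : x * y = 0) : |x| * |y| = 0 := by
  have hx := posPart_inf_negPart_eq_zero x
  have hy := posPart_inf_negPart_eq_zero y
  have hxp := posPart_nonneg x
  have hxn := negPart_nonneg x
  have hyp := posPart_nonneg y
  have hyn := negPart_nonneg y
  set P := x⁺ * y⁺ + x⁻ * y⁻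
  set Q := x⁺ * y⁻ + x⁻ * y⁺
  have hPQ : P ⊓ Q = 0 :=
    add_inf_add_eq_zero (mul_nonneg hxp hyp) (mul_nonneg hxn hyn) (mul_nonneg hxp hyn)
      (mul_nonneg hxn hyp) (hE.mul_left_inf_mul_left hxp hyp hyn hy)
      (hE.mul_right_inf_mul_right hyp hxp hxn hx)
      (by rw [inf_comm]; exact hE.mul_right_inf_mul_right hyn hxp hxn hx)
      (by rw [inf_comm]; exact hE.mul_left_inf_mul_left hxn hyp hyn hy)
  have hP_eq_Q : P = Q := by
    rw [← sub_eq_zero, ← hxy, ← posPart_sub_negPart x, ← posPart_sub_negPart y]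
    simp only [P, Q]
    noncomm_ring
  have hP : P = 0 := by rwa [← hP_eq_Q, inf_idem] at hPQ
  calc |x| * |y| = P + Q := by
        rw [← posPart_add_negPart x, ← posPart_add_negPart y]
        simp only [P, Q]
        noncomm_ring
    _ = 0 := by rw [← hP_eq_Q, hP, add_zero]

theorem inf_abs_mul_self_eq_zero [AddLeftMono E] [MulPosMono E] {x y : E}
    (hE : MulPreservesDisjoint E) (hxy : x * y = 0) : (|x| ⊓ |y|) * (|x| ⊓ |y|) = 0 := by
  have ha : 0 ≤ |x| ⊓ |y| := le_inf (abs_nonneg x) (abs_nonneg y)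
  refine le_antisymm ?_ (mul_nonneg ha ha)
  calc (|x| ⊓ |y|) * (|x| ⊓ |y|) ≤ |x| * |y| :=
        mul_le_mul inf_le_left inf_le_right ha (abs_nonneg x)
    _ = 0 := hE.abs_mul_abs_eq_zero hxy

end MulPreservesDisjoint

theorem stmt_4_general {E : Type*} [Ring E] [Lattice E]
    (hadd : ∀ a b c : E, a ≤ b → a + c ≤ b + c)
    (hmulpos : ∀ a b : E, 0 ≤ a → 0 ≤ b → 0 ≤ a * b)
    (hf : ∀ a x y : E, 0 ≤ a → 0 ≤ x → 0 ≤ y → x ⊓ y = 0 →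
      (a * x) ⊓ y = 0 ∧ (x * a) ⊓ y = 0) :
    (∀ x y : E, x * y = 0 → |x| ⊓ |y| = 0) ↔
      (∀ x : E, 0 < x → x * x ≠ 0) := by
  have : AddLeftMono E := ⟨fun c a b h ↦ by simpa only [add_comm c] using hadd a b c h⟩
  have := PosMulMono.of_mul_nonneg hmulpos
  have := MulPosMono.of_mul_nonneg hmulpos
  constructor
  · intro hfaithful x hx hxx
    have hx0 := hfaithful x x hxx
    rw [inf_idem, abs_of_pos hx] at hx0
    exact hx.ne' hx0
  · intro hsq x y hxy
    by_contra hne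
    exact hsq _ (lt_of_le_of_ne (le_inf (abs_nonneg x) (abs_nonneg y)) (Ne.symm hne))
      (MulPreservesDisjoint.inf_abs_mul_self_eq_zero hf hxy)

/-- An Archimedean `f`-algebra `E` is faithful (i.e. `x * y = 0` implies
`|x| ⊓ |y| = 0`) if and only if there is no strictly positive element with zero square. -/
theorem stmt_4 {E : Type*} [Ring E] [Lattice E] [Module ℝ E]
    (hadd : ∀ a b c : E, a ≤ b → a + c ≤ b + c)
    (hmulpos : ∀ a b : E, 0 ≤ a → 0 ≤ b → 0 ≤ a * b)
    (hf : ∀ a x y : E, 0 ≤ a → 0 ≤ x → 0 ≤ y → x ⊓ y = 0 →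
      (a * x) ⊓ y = 0 ∧ (x * a) ⊓ y = 0)
    (harch : ∀ x y : E, 0 ≤ x → 0 ≤ y → (∀ n : ℕ, n • x ≤ y) → x = 0) :
    (∀ x y : E, x * y = 0 → |x| ⊓ |y| = 0) ↔
      (∀ x : E, 0 < x → x * x ≠ 0) :=
  stmt_4_general hadd hmulpos hf
end

section
/- Let Q be a topological space and f, g : Q → ℝ ∪ {±∞} continuous functions each taking the values ±∞ only on a nowhere dense set. Then the set Q₀ = {q : |f(q)| < ∞} ∩ {q : |g(q)| < ∞} is an open dense subset of Q, and if Q is quasi-extremally disconnected compact Hausdorff there is a unique continuous h : Q → ℝ ∪ {±∞} with h(q) = f(q) + g(q) for all q ∈ Q₀. -/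
/-!
The exceptional set of each of `f`, `g` is closed and nowhere dense, so `Q₀` is open and dense,
and a continuous `h` is determined by its values there. For existence, take the open sets
`V r = (f, g)⁻¹' interior {x + y < r}` for rational `r`; they are Fσ because open subsets of the
metrizable space `EReal × EReal` are. In a quasi-extremally disconnected space their closures are
clopen, which makes `h q = inf {r | q ∈ closure (V r)}` continuous, and `h q = f q + g q` wherever
addition is continuous at `(f q, g q)`, in particular on `Q₀`.
-/

/-- An `Fσ` set is a countable union of closed sets. -/
def IsFsigma {Q : Type*} [TopologicalSpace Q] (s : Set Q) : Prop :=
  ∃ T : ℕ → Set Q, (∀ n, IsClosed (T n)) ∧ s = ⋃ n, T n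

open Set Topology

section Fsigma

variable {X Y : Type*} [TopologicalSpace X] [TopologicalSpace Y]

theorem IsFsigma.preimage {f : X → Y} (hf : Continuous f) {s : Set Y} (hs : IsFsigma s) :
    IsFsigma (f ⁻¹' s) := by
  obtain ⟨T, hT, rfl⟩ := hs
  exact ⟨fun n => f ⁻¹' T n, fun n => (hT n).preimage hf, preimage_iUnion⟩

theorem IsOpen.isFsigma [PerfectlyNormalSpace X] {s : Set X} (hs : IsOpen s) : IsFsigma s := by
  obtain ⟨U, hU, hsU⟩ := isGδ_iff_eq_iInter_nat.1 hs.isClosed_compl.isGδ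
  refine ⟨fun n => (U n)ᶜ, fun n => (hU n).isClosed_compl, ?_⟩
  rw [← compl_iInter, ← hsU, compl_compl]

end Fsigma

def QuasiExtremallyDisconnected (Q : Type*) [TopologicalSpace Q] : Prop :=
  ∀ U : Set Q, IsOpen U → IsFsigma U → IsOpen (closure U)

section LevelInf

variable {Q : Type*} [TopologicalSpace Q] {V : ℚ → Set Q} {q : Q}

noncomputable def levelInf (V : ℚ → Set Q) (q : Q) : EReal :=
  ⨅ (r : ℚ) (_ : q ∈ closure (V r)), ((r : ℝ) : EReal)

theorem levelInf_le {r : ℚ} (h : q ∈ closure (V r)) : levelInf V q ≤ ((r : ℝ) : EReal) :=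
  iInf₂_le r h

theorem le_levelInf (hV : Monotone V) {r : ℚ} (h : q ∉ closure (V r)) :
    ((r : ℝ) : EReal) ≤ levelInf V q := by
  refine le_iInf₂ fun s hs => ?_
  have hrs : r ≤ s := le_of_not_gt fun hsr => h (closure_mono (hV hsr.le) hs)
  exact_mod_cast hrs

theorem levelInf_lt_iff {t : EReal} :
    levelInf V q < t ↔ ∃ r : ℚ, ((r : ℝ) : EReal) < t ∧ q ∈ closure (V r) := by
  simp only [levelInf, iInf_lt_iff, exists_prop, and_comm]

theorem continuous_levelInf (hV : Monotone V) (hVo : ∀ r, IsOpen (closure (V r))) :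
    Continuous (levelInf V) := by
  refine continuous_iff_lower_upperSemicontinuous.2 ⟨?_, ?_⟩
  · refine lowerSemicontinuous_iff_isOpen_preimage.2 fun a => ?_
    have : levelInf V ⁻¹' Ioi a = ⋃ (r : ℚ) (_ : a < ((r : ℝ) : EReal)), (closure (V r))ᶜ := by
      ext q
      simp only [mem_preimage, mem_Ioi, mem_iUnion, mem_compl_iff, exists_prop]
      constructor
      · intro hq
        obtain ⟨r, har, hrq⟩ := EReal.exists_rat_btwn_of_lt hq
        exact ⟨r, har, fun hmem => (levelInf_le hmem).not_gt hrq⟩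
      · rintro ⟨r, har, hq⟩
        exact har.trans_le (le_levelInf hV hq)
    rw [this]
    exact isOpen_biUnion fun _ _ => isClosed_closure.isOpen_compl
  · refine upperSemicontinuous_iff_isOpen_preimage.2 fun a => ?_
    have : levelInf V ⁻¹' Iio a = ⋃ (r : ℚ) (_ : ((r : ℝ) : EReal) < a), closure (V r) := by
      ext q
      simp only [mem_preimage, mem_Iio, mem_iUnion, exists_prop, levelInf_lt_iff]
    rw [this]
    exact isOpen_biUnion fun r _ => hVo r

theorem levelInf_eq {c : EReal} (hlt : ∀ r : ℚ, c < ((r : ℝ) : EReal) → q ∈ closure (V r))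
    (hgt : ∀ r : ℚ, ((r : ℝ) : EReal) < c → q ∉ closure (V r)) : levelInf V q = c := by
  refine le_antisymm (le_of_not_gt fun hc => ?_) (le_of_not_gt fun hc => ?_)
  · obtain ⟨r, hcr, hrq⟩ := EReal.exists_rat_btwn_of_lt hc
    exact (levelInf_le (hlt r hcr)).not_gt hrq
  · obtain ⟨r, hr, hq⟩ := levelInf_lt_iff.1 hc
    exact hgt r hr hq

end LevelInf

theorem QuasiExtremallyDisconnected.exists_continuous_eq_of_continuousAt {Q X : Type*}
    [TopologicalSpace Q] [TopologicalSpace X] [PerfectlyNormalSpace X]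
    (hQ : QuasiExtremallyDisconnected Q) {S : Q → X} (hS : Continuous S) (φ : X → EReal) :
    ∃ h : Q → EReal, Continuous h ∧ ∀ q, ContinuousAt φ (S q) → h q = φ (S q) := by
  set V : ℚ → Set Q := fun r => S ⁻¹' interior (φ ⁻¹' Iio ((r : ℝ) : EReal))
  have hV : Monotone V := fun r s hrs =>
    preimage_mono <| interior_mono <| preimage_mono <| Iio_subset_Iio <| by exact_mod_cast hrs
  have hVo : ∀ r, IsOpen (V r) := fun r => isOpen_interior.preimage hS
  refine ⟨levelInf V, continuous_levelInf hV fun r =>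
    hQ _ (hVo r) (isOpen_interior.isFsigma.preimage hS), fun q hφ => levelInf_eq ?_ ?_⟩
  · intro r hr
    exact subset_closure <| mem_interior_iff_mem_nhds.2 <| hφ <| Iio_mem_nhds hr
  · intro r hr hq
    obtain ⟨p, hpr, hpV⟩ :=
      mem_closure_iff_nhds.1 hq _ ((hφ.comp hS.continuousAt) (Ioi_mem_nhds hr))
    have hpφ : S p ∈ φ ⁻¹' Iio ((r : ℝ) : EReal) := interior_subset hpV
    exact (show φ (S p) < _ from hpφ).not_gt hpr

theorem isOpen_dense_setOf_ne_top_ne_bot {Q : Type*} [TopologicalSpace Q] {k : Q → EReal}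
    (hk : Continuous k) (hnd : IsNowhereDense {q | k q = ⊤ ∨ k q = ⊥}) :
    IsOpen {q | k q ≠ ⊤ ∧ k q ≠ ⊥} ∧ Dense {q | k q ≠ ⊤ ∧ k q ≠ ⊥} := by
  have hclosed : IsClosed {q | k q = ⊤ ∨ k q = ⊥} :=
    (isClosed_singleton.preimage hk).union (isClosed_singleton.preimage hk)
  simpa only [compl_ofPred, not_or] using isClosed_isNowhereDense_iff_compl.1 ⟨hclosed, hnd⟩

/-- Let `f, g : Q → ℝ ∪ {±∞}` be continuous, taking infinite values only on
nowhere dense sets.  Then `Q₀ = {|f| < ∞} ∩ {|g| < ∞}` is open and dense, and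
if `Q` is quasi-extremally disconnected compact Hausdorff then there is a unique
continuous `h : Q → ℝ ∪ {±∞}` with `h = f + g` on `Q₀`. -/
theorem stmt_9 {Q : Type*} [TopologicalSpace Q] (f g : Q → EReal)
    (hf : Continuous f) (hg : Continuous g)
    (hfnd : IsNowhereDense {q | f q = ⊤ ∨ f q = ⊥})
    (hgnd : IsNowhereDense {q | g q = ⊤ ∨ g q = ⊥}) :
    IsOpen ({q | f q ≠ ⊤ ∧ f q ≠ ⊥} ∩ {q | g q ≠ ⊤ ∧ g q ≠ ⊥}) ∧
      Dense ({q | f q ≠ ⊤ ∧ f q ≠ ⊥} ∩ {q | g q ≠ ⊤ ∧ g q ≠ ⊥}) ∧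
      (CompactSpace Q → T2Space Q →
        (∀ U : Set Q, IsOpen U → IsFsigma U → IsOpen (closure U)) →
        ∃! h : Q → EReal, Continuous h ∧
          ∀ q ∈ {q | f q ≠ ⊤ ∧ f q ≠ ⊥} ∩ {q | g q ≠ ⊤ ∧ g q ≠ ⊥},
            h q = f q + g q) := by
  obtain ⟨hfo, hfd⟩ := isOpen_dense_setOf_ne_top_ne_bot hf hfnd
  obtain ⟨hgo, hgd⟩ := isOpen_dense_setOf_ne_top_ne_bot hg hgnd
  have hdense := hfd.inter_of_isOpen_left hgd hfo
  refine ⟨hfo.inter hgo, hdense, fun _ _ hQ => ?_⟩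
  obtain ⟨h, hcont, hval⟩ := QuasiExtremallyDisconnected.exists_continuous_eq_of_continuousAt hQ
    (hf.prodMk hg) fun p : EReal × EReal => p.1 + p.2
  have hsum : ∀ q ∈ {q | f q ≠ ⊤ ∧ f q ≠ ⊥} ∩ {q | g q ≠ ⊤ ∧ g q ≠ ⊥}, h q = f q + g q :=
    fun q hq => hval q (EReal.continuousAt_add (.inl hq.1.1) (.inl hq.1.2))
  refine ⟨h, ⟨hcont, hsum⟩, fun h' ⟨hcont', hsum'⟩ => ?_⟩
  exact hcont'.ext_on hdense hcont fun q hq => (hsum' q hq).trans (hsum q hq).symm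
end
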